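/- arXiv:1307.7920 — 7 statements merged into one kernel-verified Lean document; each statement's English description precedes it below -/
import Mathlib

section
/- Let n = pq be a Frobenius pseudoprime with parameters (a,b,c), where p is an odd prime with Jacobi symbol J(c/p) = -1 and z = a+b√c is a unit modulo p. Then z^{q-1} ≡ 1 (mod p) in ℤ[√c]. -/
/-- `n` is a Frobenius pseudoprime with parameters `(a, b, c)`:
a composite odd non-square natural number, coprime to `a*b*c`, with `c`
squarefree, Jacobi symbol `J(c/n) = -1`, satisfying
`(a + b√c)^n ≡ a - b√c (mod n)` in `ℤ[√c]`. -/
def IsFPP (a b c : ℤ) (n : ℕ) : Prop :=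
  1 < n ∧ ¬ n.Prime ∧ Odd n ∧ ¬ IsSquare n ∧
  IsCoprime (a * b * c) (n : ℤ) ∧ Squarefree c ∧ jacobiSym c n = -1 ∧
  (n : Zsqrtd c) ∣ ((⟨a, b⟩ : Zsqrtd c) ^ n - star (⟨a, b⟩ : Zsqrtd c))

/-! In `ℤ[√c]/(p)` the Frobenius `x ↦ x^p` is induced by conjugation, because
`√c^p = c^((p-1)/2) √c = -√c` by Euler's criterion. Hence `z^(pq) ≡ z̄ ≡ z^p (mod p)`;
cancelling the unit `z^p` gives `(z^(q-1))^p ≡ 1`, and since the Frobenius is an involution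
modulo `p`, `z^(q-1) ≡ 1`. -/

namespace Zsqrtd

variable {d : ℤ} {p : ℕ} [hp : Fact p.Prime]

instance charP_quotient_span_natCast : CharP (ℤ√d ⧸ Ideal.span {(p : ℤ√d)}) p :=
  CharP.quotient _ p fun hunit => hp.out.one_lt.ne' <| by
    have h := isUnit_iff_dvd_one.mp hunit
    rw [← Int.cast_natCast, ← Int.cast_one, intCast_dvd_intCast] at h
    exact_mod_cast Int.eq_one_of_dvd_one (Int.natCast_nonneg p) h

theorem mk_sqrtd_pow_prime (hd : legendreSym p d = -1) :
    Ideal.Quotient.mk (Ideal.span {(p : ℤ√d)}) sqrtd ^ p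
      = -Ideal.Quotient.mk (Ideal.span {(p : ℤ√d)}) sqrtd := by
  set f := Ideal.Quotient.mk (Ideal.span {(p : ℤ√d)})
  have hp2 : p ≠ 2 := by
    rintro rfl
    exact (legendreSym.eq_neg_one_iff 2).mp hd
      (FiniteField.isSquare_of_char_two (ZMod.ringChar_zmod_n 2) _)
  have heuler : (d : ℤ√d ⧸ Ideal.span {(p : ℤ√d)}) ^ (p / 2) = -1 := by
    have h := congrArg (ZMod.castHom dvd_rfl (ℤ√d ⧸ Ideal.span {(p : ℤ√d)}))
      (legendreSym.eq_pow p d)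
    simpa [hd] using h.symm
  obtain ⟨k, hk⟩ := hp.out.odd_of_ne_two hp2
  calc f sqrtd ^ p = (f sqrtd * f sqrtd) ^ (p / 2) * f sqrtd := by
        rw [← sq, ← pow_mul, ← pow_succ]; congr 1; omega
    _ = -f sqrtd := by rw [← map_mul, dmuld, map_intCast, heuler, neg_one_mul]

theorem mk_pow_prime (hd : legendreSym p d = -1) (w : ℤ√d) :
    Ideal.Quotient.mk (Ideal.span {(p : ℤ√d)}) w ^ p
      = Ideal.Quotient.mk (Ideal.span {(p : ℤ√d)}) (star w) := by
  obtain ⟨x, y⟩ := w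
  have hfix (m : ℤ) : (m : ℤ√d ⧸ Ideal.span {(p : ℤ√d)}) ^ p = m :=
    map_intCast (frobenius _ p) m
  rw [star_mk, decompose, decompose (x := x)]
  simp only [map_add, map_mul, map_neg, map_intCast, Int.cast_neg]
  rw [add_pow_char, mul_pow, hfix, hfix, mk_sqrtd_pow_prime hd]
  ring

theorem mk_eq_one_of_pow_prime_eq_one (hd : legendreSym p d = -1) {w : ℤ√d}
    (hw : Ideal.Quotient.mk (Ideal.span {(p : ℤ√d)}) w ^ p = 1) :
    Ideal.Quotient.mk (Ideal.span {(p : ℤ√d)}) w = 1 := by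
  rw [← star_star w, ← mk_pow_prime hd, ← mk_pow_prime hd, hw, one_pow]

end Zsqrtd

theorem stmt_3_general (a b c : ℤ) (n p q : ℕ) (hn : IsFPP a b c n) (hpq : n = p * q)
    (hp : p.Prime) (hJ : jacobiSym c p = -1)
    (hu : IsUnit (Ideal.Quotient.mk (Ideal.span {(p : Zsqrtd c)}) (⟨a, b⟩ : Zsqrtd c))) :
    (p : Zsqrtd c) ∣ ((⟨a, b⟩ : Zsqrtd c) ^ (q - 1) - 1) := by
  have := Fact.mk hp
  have hd : legendreSym p c = -1 := by rwa [jacobiSym.legendreSym.to_jacobiSym]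
  obtain ⟨-, -, -, -, -, -, -, hfpp⟩ := hn
  rcases q with _ | r
  · simp
  set z : ℤ√c := ⟨a, b⟩
  set f := Ideal.Quotient.mk (Ideal.span {(p : ℤ√c)})
  have hpn : f z ^ (p * (r + 1)) = f z ^ p := by
    rw [Zsqrtd.mk_pow_prime hd, ← map_pow, ← hpq, Ideal.Quotient.eq, Ideal.mem_span_singleton]
    refine dvd_trans ?_ hfpp
    rw [hpq, Nat.cast_mul]
    exact dvd_mul_right _ _
  rw [Nat.add_sub_cancel, ← Ideal.mem_span_singleton, ← Ideal.Quotient.eq_zero_iff_mem, map_sub,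
    map_one, sub_eq_zero]
  refine Zsqrtd.mk_eq_one_of_pow_prime_eq_one hd ((hu.pow p).mul_left_cancel ?_)
  rw [mul_one, map_pow, ← pow_mul, ← pow_add, ← hpn]
  ring

/-- Theorem 1(a): if n = pq is an FPP with parameters (a,b,c), p an odd prime with
J(c/p) = -1 and z = a+b√c a unit mod p, then z^(q-1) ≡ 1 (mod p). -/
theorem stmt_3 (a b c : ℤ) (n p q : ℕ) (hn : IsFPP a b c n) (hpq : n = p * q)
    (hp : p.Prime) (hodd : Odd p) (hJ : jacobiSym c p = -1)
    (hu : IsUnit (Ideal.Quotient.mk (Ideal.span {(p : Zsqrtd c)}) (⟨a, b⟩ : Zsqrtd c))) :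
    (p : Zsqrtd c) ∣ ((⟨a, b⟩ : Zsqrtd c) ^ (q - 1) - 1) :=
  stmt_3_general a b c n p q hn hpq hp hJ hu
end

section
/- Let n = pq be a Frobenius pseudoprime with parameters (a,b,c), p prime with J(c/p) = -1, and z = a+b√c a unit in ℤ_p[√c]. Then q is coprime to the multiplicative order of z in ℤ_p[√c]*. -/
theorem IsUnit.coprime_orderOf_of_pow_mul_eq_pow {M : Type*} [Monoid M] {x : M} (hx : IsUnit x)
    {p q : ℕ} (hq : x ^ (p * q) = x ^ p) (hp : x ^ (p * p) = x) : q.Coprime (orderOf x) := by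
  obtain ⟨u, rfl⟩ := hx
  rw [orderOf_units]
  rw [← Units.val_pow_eq_pow_val, ← Units.val_pow_eq_pow_val, Units.val_inj,
    pow_eq_pow_iff_modEq] at hq
  rw [← Units.val_pow_eq_pow_val, Units.val_inj, ← pow_one u, ← pow_mul, one_mul,
    pow_eq_pow_iff_modEq] at hp
  have hpo : p.Coprime (orderOf u) := Nat.coprime_of_mul_modEq_one p hp
  have hq1 : q ≡ 1 [MOD orderOf u] :=
    Nat.ModEq.cancel_left_of_coprime (Nat.coprime_comm.mp hpo) (by rwa [mul_one])
  rw [Nat.Coprime, hq1.gcd_eq, Nat.gcd_one_left]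

theorem pow_char_eq_neg_of_mul_self_eq_intCast {R : Type*} [CommRing R] {p : ℕ} [Fact p.Prime]
    [CharP R p] (hp2 : p ≠ 2) {c : ℤ} (hc : legendreSym p c = -1) {s : R} (hs : s * s = c) :
    s ^ p = -s := by
  obtain ⟨k, hk⟩ := (Fact.out : p.Prime).odd_of_ne_two hp2
  have hck : (c : R) ^ k = -1 := by
    have h := legendreSym.eq_pow p c
    rw [hc, show p / 2 = k by omega] at h
    simpa using congr(ZMod.castHom (dvd_refl p) R $h).symm
  rw [hk, pow_succ, pow_mul, sq, hs, hck, neg_one_mul]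

theorem Zsqrtd.pow_char_eq_star {R : Type*} [CommRing R] {p : ℕ} [Fact p.Prime] [CharP R p]
    (hp2 : p ≠ 2) {c : ℤ} (hc : legendreSym p c = -1) (f : ℤ√c →+* R) (z : ℤ√c) :
    f z ^ p = f (star z) := by
  have hs : f sqrtd ^ p = -f sqrtd :=
    pow_char_eq_neg_of_mul_self_eq_intCast hp2 hc (by rw [← map_mul, dmuld, map_intCast])
  have : (frobenius R p).comp f = f.comp (starRingEnd (ℤ√c)) :=
    hom_ext _ _ <| by
      simp only [RingHom.comp_apply, frobenius_def, hs, starRingEnd_apply, ← map_neg]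
      congr 1
  exact congr($this z)

theorem Zsqrtd.charP_quotient_span_natCast_s5 (c : ℤ) {p : ℕ} (hp : p.Prime) :
    CharP (ℤ√c ⧸ Ideal.span {(p : ℤ√c)}) p := by
  have := Fact.mk hp
  refine CharP.quotient _ p fun h => ?_
  rw [isUnit_iff_norm_isUnit, norm_natCast, Int.isUnit_iff] at h
  have : (2 : ℤ) ≤ p := mod_cast hp.two_le
  rcases h with h | h <;> nlinarith

/-- Corollary: if n = pq is an FPP with parameters (a,b,c), p prime with J(c/p) = -1,
and z = a+b√c a unit in ℤ_p[√c], then q is coprime to the multiplicative order of z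
in ℤ_p[√c]. -/
theorem stmt_5 (a b c : ℤ) (n p q : ℕ) (hn : IsFPP a b c n) (hpq : n = p * q)
    (hp : p.Prime) (hJ : jacobiSym c p = -1)
    (hu : IsUnit (Ideal.Quotient.mk (Ideal.span {(p : Zsqrtd c)}) (⟨a, b⟩ : Zsqrtd c))) :
    Nat.Coprime q
      (orderOf (Ideal.Quotient.mk (Ideal.span {(p : Zsqrtd c)}) (⟨a, b⟩ : Zsqrtd c))) := by
  obtain ⟨-, -, hodd, -, -, -, -, hdvd⟩ := hn
  subst hpq
  have := Fact.mk hp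
  have := Zsqrtd.charP_quotient_span_natCast_s5 c hp
  have hp2 : p ≠ 2 := by
    rintro rfl
    exact Nat.not_even_iff_odd.mpr hodd (even_two.mul_right q)
  have hc : legendreSym p c = -1 := by rwa [jacobiSym.legendreSym.to_jacobiSym]
  set mk := Ideal.Quotient.mk (Ideal.span {(p : Zsqrtd c)})
  have hfrob : ∀ z, mk z ^ p = mk (star z) := Zsqrtd.pow_char_eq_star hp2 hc mk
  have hcong : mk ⟨a, b⟩ ^ (p * q) = mk ⟨a, b⟩ ^ p := by
    rw [← map_pow, hfrob, Ideal.Quotient.eq, Ideal.mem_span_singleton]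
    exact (Nat.cast_dvd_cast (dvd_mul_right p q)).trans hdvd
  have hpp : mk ⟨a, b⟩ ^ (p * p) = mk ⟨a, b⟩ := by rw [pow_mul, hfrob, hfrob, star_star]
  exact hu.coprime_orderOf_of_pow_mul_eq_pow hcong hpp
end

section
/- Let z = a+b√c in ℤ[√c] and write z^k = a_k + b_k√c. If n = pq is a Frobenius pseudoprime with parameters (a,b,c), p prime, and J(c/p) = +1, then p divides gcd(a_{q+1} - (a²-b²c), b_{q+1}). -/
/-!
Let `r` be a square root of `c` modulo `p`, which exists since `J(c/p) = 1`. Each of the two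
ring maps `ℤ[√c] → 𝔽_p` sending `√c` to `±r` kills `p`, so it turns the Frobenius congruence
into `z^{pq} ≡ z̄`; since `x^p = x` in `𝔽_p` this reads `z^q ≡ z̄`, whence `z^{q+1} ≡ z z̄ = N(z)`.
So `a_{q+1} ± b_{q+1} r ≡ a² - b²c`, and subtracting the two congruences gives `2 b_{q+1} r ≡ 0`.
-/

theorem ZMod.two_ne_zero_of_odd {p : ℕ} (hp : p.Prime) (hodd : Odd p) : (2 : ZMod p) ≠ 0 := by
  rw [← Nat.cast_ofNat, Ne, ZMod.natCast_eq_zero_iff, Nat.prime_dvd_prime_iff_eq hp Nat.prime_two]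
  rintro rfl
  exact Nat.not_odd_iff_even.mpr even_two hodd

theorem ZMod.exists_sqrt_ne_zero_of_jacobiSym_eq_one {a : ℤ} {p : ℕ} [Fact p.Prime]
    (h : jacobiSym a p = 1) : ∃ r : ZMod p, r * r = a ∧ r ≠ 0 := by
  obtain ⟨r, hr⟩ := ZMod.isSquare_of_jacobiSym_eq_one h
  refine ⟨r, hr.symm, ?_⟩
  rintro rfl
  have ha := (legendreSym.eq_zero_iff p a).mpr (by rw [hr, mul_zero])
  rw [jacobiSym.legendreSym.to_jacobiSym, h] at ha
  exact one_ne_zero ha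

namespace Zsqrtd

theorem lift_pow_succ_eq_norm {d : ℤ} {p q : ℕ} [Fact p.Prime] {z : ℤ√d}
    (hz : (p : ℤ√d) ∣ z ^ (p * q) - star z) (r : {r : ZMod p // r * r = d}) :
    lift r (z ^ (q + 1)) = z.norm := by
  have hstar : lift r z ^ (p * q) = lift r (star z) := by
    obtain ⟨w, hw⟩ := hz
    have := congrArg (lift r) hw
    rwa [map_sub, map_mul, map_natCast, ZMod.natCast_self, zero_mul, sub_eq_zero, map_pow] at this
  have hfrob : lift r z ^ (p * q) = lift r z ^ q := by
    rw [pow_mul, ZMod.pow_card]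
  calc lift r (z ^ (q + 1)) = lift r z ^ q * lift r z := by rw [map_pow, pow_succ]
    _ = lift r (star z) * lift r z := by rw [← hfrob, hstar]
    _ = z.norm := by rw [← map_mul, mul_comm, ← norm_eq_mul_conj, map_intCast]

theorem cast_im_eq_zero_and_cast_re_eq {R : Type*} [CommRing R] [NoZeroDivisors R] {d : ℤ}
    {r : R} (hr : r * r = d) (hr₀ : r ≠ 0) (h₂ : (2 : R) ≠ 0) {u : ℤ√d} {w : R}
    (hpos : lift ⟨r, hr⟩ u = w) (hneg : lift ⟨-r, by rw [neg_mul_neg, hr]⟩ u = w) :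
    (u.im : R) = 0 ∧ (u.re : R) = w := by
  simp only [lift_apply_apply] at hpos hneg
  have him : (2 : R) * r * u.im = 0 := by linear_combination hpos - hneg
  have him' : (u.im : R) = 0 := by simpa [h₂, hr₀] using him
  exact ⟨him', by simpa [him'] using hpos⟩

end Zsqrtd

/-- Corollary 2.2(b): writing z^k = a_k + b_k √c, if n = pq is an FPP with parameters
(a,b,c), p prime and J(c/p) = +1, then p divides gcd(a_{q+1} - (a²-b²c), b_{q+1}). -/
theorem stmt_7 (a b c : ℤ) (n p q : ℕ) (hn : IsFPP a b c n) (hpq : n = p * q)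
    (hp : p.Prime) (hJ : jacobiSym c p = 1) :
    (p : ℤ) ∣ (Int.gcd (((⟨a, b⟩ : Zsqrtd c) ^ (q + 1)).re - (a ^ 2 - b ^ 2 * c))
      (((⟨a, b⟩ : Zsqrtd c) ^ (q + 1)).im) : ℤ) := by
  obtain ⟨-, -, hodd, -, -, -, -, hfrob⟩ := hn
  have : Fact p.Prime := ⟨hp⟩
  obtain ⟨r, hr, hr₀⟩ := ZMod.exists_sqrt_ne_zero_of_jacobiSym_eq_one hJ
  have hdvd : (p : Zsqrtd c) ∣ (⟨a, b⟩ : Zsqrtd c) ^ (p * q) - star ⟨a, b⟩ := by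
    subst hpq
    rw [Nat.cast_mul] at hfrob
    exact dvd_of_mul_right_dvd hfrob
  have hnorm : ((⟨a, b⟩ : Zsqrtd c).norm : ZMod p) = a ^ 2 - b ^ 2 * c := by
    rw [Zsqrtd.norm_def]; push_cast; ring
  have hp₂ := ZMod.two_ne_zero_of_odd hp (Nat.odd_mul.mp (hpq ▸ hodd)).1
  obtain ⟨him, hre⟩ := Zsqrtd.cast_im_eq_zero_and_cast_re_eq hr hr₀ hp₂
    ((Zsqrtd.lift_pow_succ_eq_norm hdvd _).trans hnorm)
    ((Zsqrtd.lift_pow_succ_eq_norm hdvd _).trans hnorm)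
  refine Int.dvd_coe_gcd ?_ ((ZMod.intCast_zmod_eq_zero_iff_dvd _ _).mp him)
  rw [← ZMod.intCast_zmod_eq_zero_iff_dvd]
  push_cast
  rw [hre, sub_self]
end

section
/- Let n be a Frobenius pseudoprime with parameters (a,b,c), p a prime divisor of n with J(c/p) = +1, q = n/p, and d ∈ ℤ_p with d² = c. Set w₁ = a+bd and w₂ = a-bd in ℤ_p* (both nonzero). Then w₁^q ≡ w₂ and w₂^q ≡ w₁ (mod p). -/
namespace Zsqrtd

theorem map_pow_eq_map_star_of_dvd {c : ℤ} {R : Type*} [CommRing R] (φ : ℤ√c →+* R) {n : ℕ}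
    (hn : (n : R) = 0) {z : ℤ√c} (h : (n : ℤ√c) ∣ z ^ n - star z) :
    φ z ^ n = φ (star z) := by
  obtain ⟨w, hw⟩ := h
  have hφ := congrArg φ hw
  rw [map_sub, map_mul, map_natCast, hn, zero_mul, map_pow] at hφ
  exact sub_eq_zero.mp hφ

theorem add_mul_pow_eq_sub_mul_of_dvd {a b c : ℤ} {p q : ℕ} [Fact p.Prime] {d : ZMod p}
    (hd : d ^ 2 = c)
    (h : ((p * q : ℕ) : ℤ√c) ∣ (⟨a, b⟩ : ℤ√c) ^ (p * q) - star (⟨a, b⟩ : ℤ√c)) :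
    ((a : ZMod p) + b * d) ^ q = a - b * d := by
  let φ : ℤ√c →+* ZMod p := lift ⟨d, by rw [← hd, sq]⟩
  have hn : ((p * q : ℕ) : ZMod p) = 0 := by
    rw [Nat.cast_mul, ZMod.natCast_self, zero_mul]
  have key := map_pow_eq_map_star_of_dvd φ hn h
  have hz : φ ⟨a, b⟩ = a + b * d := rfl
  have hz_star : φ (star ⟨a, b⟩) = a - b * d := by
    change (a : ZMod p) + ((-b : ℤ) : ZMod p) * d = a - b * d
    push_cast
    ring
  rwa [hz, hz_star, pow_mul, ZMod.pow_card] at key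

end Zsqrtd

theorem stmt_10_general (a b c : ℤ) (n p q : ℕ) (d : ZMod p) (hn : IsFPP a b c n)
    (hp : p.Prime) (hpq : n = p * q)
    (hd : d ^ 2 = (c : ZMod p)) :
    ((a : ZMod p) + b * d) ^ q = (a : ZMod p) - b * d ∧
    ((a : ZMod p) - b * d) ^ q = (a : ZMod p) + b * d := by
  have : Fact p.Prime := ⟨hp⟩
  obtain ⟨-, -, -, -, -, -, -, hdvd⟩ := hn
  subst hpq
  refine ⟨Zsqrtd.add_mul_pow_eq_sub_mul_of_dvd hd hdvd, ?_⟩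
  have hd_neg : (-d) ^ 2 = (c : ZMod p) := by rw [neg_sq, hd]
  simpa only [mul_neg, ← sub_eq_add_neg, sub_neg_eq_add] using
    Zsqrtd.add_mul_pow_eq_sub_mul_of_dvd hd_neg hdvd

/-- Theorem 2.6 (swap part): if n = pq is an FPP with parameters (a,b,c), p prime with
J(c/p) = +1, d² = c in ℤ_p, and w₁ = a+bd, w₂ = a-bd are nonzero in ℤ_p, then
w₁^q = w₂ and w₂^q = w₁ in ℤ_p. -/
theorem stmt_10 (a b c : ℤ) (n p q : ℕ) (d : ZMod p) (hn : IsFPP a b c n)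
    (hp : p.Prime) (hpq : n = p * q) (hJ : jacobiSym c p = 1)
    (hd : d ^ 2 = (c : ZMod p))
    (hw1 : (a : ZMod p) + b * d ≠ 0) (hw2 : (a : ZMod p) - b * d ≠ 0) :
    ((a : ZMod p) + b * d) ^ q = (a : ZMod p) - b * d ∧
    ((a : ZMod p) - b * d) ^ q = (a : ZMod p) + b * d :=
  stmt_10_general a b c n p q d hn hp hpq hd
end

section
/- Let n be a Frobenius pseudoprime with parameters (a,b,c), p a prime divisor with J(c/p) = +1, d² = c in ℤ_p, w₁ = a+bd, w₂ = a-bd ∈ ℤ_p*. Then gcd(ord(w₁w₂, p), ord(w₁/w₂, p)) ≤ 2, where ord(x,p) is the multiplicative order of x modulo p. -/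
theorem Zsqrtd.lift_pow_eq_lift_star {R : Type*} [CommRing R] {c : ℤ} (r : {r : R // r * r = c})
    {n : ℕ} (hn : (n : R) = 0) {z : Zsqrtd c} (h : (n : Zsqrtd c) ∣ z ^ n - star z) :
    Zsqrtd.lift r z ^ n = Zsqrtd.lift r (star z) := by
  obtain ⟨k, hk⟩ := h
  rw [← sub_eq_zero, ← map_pow, ← map_sub, hk, map_mul, map_natCast, hn, zero_mul]

theorem orderOf_dvd_sub_one_of_pow_eq_self {M₀ : Type*} [MonoidWithZero M₀]
    [IsRightCancelMulZero M₀] {z : M₀} {q : ℕ} (hz : z ≠ 0) (h : z ^ q = z) : orderOf z ∣ q - 1 := by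
  rcases q with _ | q
  · exact dvd_zero _
  · refine orderOf_dvd_of_pow_eq_one (mul_right_cancel₀ hz ?_)
    rw [← pow_succ, Nat.add_sub_cancel, h, one_mul]

section PowSwap

variable {G₀ : Type*} [CommGroupWithZero G₀] {x y : G₀} {q : ℕ}

theorem orderOf_mul_dvd_sub_one_of_pow_swap (hx0 : x ≠ 0) (hy0 : y ≠ 0) (hx : x ^ q = y)
    (hy : y ^ q = x) : orderOf (x * y) ∣ q - 1 :=
  orderOf_dvd_sub_one_of_pow_eq_self (mul_ne_zero hx0 hy0) (by rw [mul_pow, hx, hy, mul_comm])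

theorem orderOf_div_dvd_add_one_of_pow_swap (hx0 : x ≠ 0) (hy0 : y ≠ 0) (hx : x ^ q = y)
    (hy : y ^ q = x) : orderOf (x / y) ∣ q + 1 := by
  refine orderOf_dvd_of_pow_eq_one ?_
  rw [pow_succ, div_pow, hx, hy, div_mul_div_cancel₀ hx0, div_self hy0]

end PowSwap

theorem Nat.gcd_dvd_two_of_dvd_sub_one_of_dvd_add_one {m k q : ℕ} (hm : m ∣ q - 1)
    (hk : k ∣ q + 1) : Nat.gcd m k ∣ 2 := by
  have h := Nat.dvd_sub ((Nat.gcd_dvd_right m k).trans hk) ((Nat.gcd_dvd_left m k).trans hm)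
  rcases q with _ | q
  · exact h.trans (by decide)
  · rwa [show q + 1 + 1 - (q + 1 - 1) = 2 by omega] at h

theorem stmt_11_general (a b c : ℤ) (n p : ℕ) [hp : Fact p.Prime] (d : ZMod p) (hn : IsFPP a b c n) (hpn : p ∣ n)
    (hd : d ^ 2 = (c : ZMod p))
    (hw1 : (a : ZMod p) + b * d ≠ 0) (hw2 : (a : ZMod p) - b * d ≠ 0) :
    Nat.gcd (orderOf (((a : ZMod p) + b * d) * ((a : ZMod p) - b * d)))
      (orderOf (((a : ZMod p) + b * d) / ((a : ZMod p) - b * d))) ≤ 2 := by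
  obtain ⟨-, -, -, -, -, -, -, hdvd⟩ := hn
  have hn0 : (n : ZMod p) = 0 := (ZMod.natCast_eq_zero_iff n p).2 hpn
  have hx : ((a : ZMod p) + b * d) ^ n = a - b * d := by
    simpa [sub_eq_add_neg] using
      Zsqrtd.lift_pow_eq_lift_star ⟨d, by rw [← sq, hd]⟩ hn0 hdvd
  have hy : ((a : ZMod p) - b * d) ^ n = a + b * d := by
    simpa [sub_eq_add_neg] using
      Zsqrtd.lift_pow_eq_lift_star ⟨-d, by rw [neg_mul_neg, ← sq, hd]⟩ hn0 hdvd
  exact Nat.le_of_dvd two_pos <| Nat.gcd_dvd_two_of_dvd_sub_one_of_dvd_add_one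
    (orderOf_mul_dvd_sub_one_of_pow_swap hw1 hw2 hx hy)
    (orderOf_div_dvd_add_one_of_pow_swap hw1 hw2 hx hy)

/-- Theorem 2.6 (gcd part): if n is an FPP with parameters (a,b,c), p a prime divisor
with J(c/p) = +1, d² = c in ℤ_p, and w₁ = a+bd, w₂ = a-bd nonzero in ℤ_p, then
gcd(ord(w₁w₂, p), ord(w₁/w₂, p)) ≤ 2. -/
theorem stmt_11 (a b c : ℤ) (n p : ℕ) [hp : Fact p.Prime] (d : ZMod p) (hn : IsFPP a b c n) (hpn : p ∣ n) (hJ : jacobiSym c p = 1)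
    (hd : d ^ 2 = (c : ZMod p))
    (hw1 : (a : ZMod p) + b * d ≠ 0) (hw2 : (a : ZMod p) - b * d ≠ 0) :
    Nat.gcd (orderOf (((a : ZMod p) + b * d) * ((a : ZMod p) - b * d)))
      (orderOf (((a : ZMod p) + b * d) / ((a : ZMod p) - b * d))) ≤ 2 :=
  stmt_11_general a b c n p (hp := hp) d hn hpn hd hw1 hw2
end

section
/- Let n be a Frobenius pseudoprime with parameters (a,b,c), p a prime with J(c/p) = -1 and p^s dividing n (s ≥ 1), z = a+b√c. Then z^{p+1} ≡ a² - b²c (mod p^s), equivalently z^p ≡ z̄ (mod p^s). -/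
theorem Ideal.Quotient.isUnit_mk_of_isCoprime {R : Type*} [CommRing R] {m x : R}
    (h : IsCoprime m x) : IsUnit (Ideal.Quotient.mk (Ideal.span {m}) x) := by
  obtain ⟨u, v, huv⟩ := h
  refine IsUnit.of_mul_eq_one (Ideal.Quotient.mk _ v) ?_
  rw [← map_mul, mul_comm, ← map_one (Ideal.Quotient.mk _), Ideal.Quotient.eq,
    Ideal.mem_span_singleton, ← huv]
  exact ⟨-u, by ring⟩

theorem pow_pow_eq_one_of_natCast_dvd_sub_one {R : Type*} [CommRing R] {p s : ℕ}
    (hps : (p : R) ^ s = 0) {x : R} (h : (p : R) ∣ x - 1) : x ^ p ^ s = 1 := by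
  have h' := dvd_sub_pow_of_dvd_sub h s
  rw [one_pow, pow_succ, hps, zero_mul, zero_dvd_iff, sub_eq_zero] at h'
  exact h'

theorem pow_eq_of_pow_eq_swap_of_natCast_dvd_pow_sub {R : Type*} [CommRing R] {p n s : ℕ}
    (hps : (p : R) ^ s = 0) (hpn : p ∣ n) (hn : n ≠ 0) {z w : R} (hz : IsUnit z)
    (hzw : z ^ n = w) (hwz : w ^ n = z) (hfrob : (p : R) ∣ z ^ p - w) : z ^ p = w := by
  have hpn' : p ≤ n := Nat.le_of_dvd (Nat.pos_of_ne_zero hn) hpn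
  have hnn : 1 ≤ n * n := Nat.one_le_iff_ne_zero.mpr (mul_ne_zero hn hn)
  have h_split : z ^ n = z ^ p * z ^ (n - p) := by rw [← pow_add, Nat.add_sub_cancel' hpn']
  have h_nn : z ^ (n * n - 1) = 1 := by
    refine hz.mul_left_cancel ?_
    rw [← pow_succ', Nat.sub_add_cancel hnn, mul_one, pow_mul, hzw, hwz]
  have h_mod_p : (p : R) ∣ z ^ (n - p) - 1 := by
    rw [← (hz.pow p).dvd_mul_left, mul_sub, mul_one, ← h_split, hzw, ← neg_sub, dvd_neg]
    exact hfrob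
  have h_lift : z ^ ((n - p) * p ^ s) = 1 := by
    rw [pow_mul]; exact pow_pow_eq_one_of_natCast_dvd_sub_one hps h_mod_p
  have h_nn_coprime : Nat.Coprime (n * n - 1) p :=
    ((Nat.coprime_self_sub_left hnn).2 (Nat.coprime_one_left _)).coprime_dvd_right
      (hpn.mul_right n)
  have h_coprime : Nat.Coprime (orderOf z) (p ^ s) :=
    (h_nn_coprime.pow_right s).coprime_dvd_left (orderOf_dvd_of_pow_eq_one h_nn)
  have h_np : z ^ (n - p) = 1 := orderOf_dvd_iff_pow_eq_one.mp <|
    h_coprime.dvd_of_dvd_mul_right (orderOf_dvd_of_pow_eq_one h_lift)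
  rw [← hzw, h_split, h_np, mul_one]

theorem intCast_add_mul_pow_prime {S : Type*} [CommRing S] {p : ℕ} [Fact p.Prime]
    [CharP S p] (hp_odd : Odd p) {c : ℤ} (hc : legendreSym p c = -1) {r : S} (hr : r ^ 2 = c)
    (a b : ℤ) : ((a : S) + b * r) ^ p = a - b * r := by
  have fermat (x : ℤ) : (x : S) ^ p = x := by
    rw [← map_intCast (ZMod.castHom (dvd_refl p) S), ← map_pow, ZMod.pow_card]
  have euler : (c : S) ^ (p / 2) = -1 := by
    rw [← map_intCast (ZMod.castHom (dvd_refl p) S), ← map_pow, ← legendreSym.eq_pow, hc]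
    simp
  have hr_pow : r ^ p = -r := by
    rw [← Nat.two_mul_div_two_add_one_of_odd hp_odd, pow_succ, pow_mul,
      hr, euler, neg_one_mul]
  rw [add_pow_char, mul_pow, fermat, fermat, hr_pow]
  ring

namespace Zsqrtd

variable {d : ℤ}

theorem natCast_prime_mem_nonunits {p : ℕ} (hp : p.Prime) : (p : ℤ√d) ∈ nonunits (ℤ√d) := by
  rw [mem_nonunits_iff, isUnit_iff_norm_isUnit, norm_natCast, Int.isUnit_iff]
  have := hp.two_le
  rintro (h | h) <;> nlinarith

theorem norm_mk (a b : ℤ) : (⟨a, b⟩ : ℤ√d).norm = a ^ 2 - b ^ 2 * d := by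
  rw [norm_def]; ring

theorem isCoprime_norm_of_legendreSym_eq_neg_one {p : ℕ} [hp : Fact p.Prime]
    (hd : legendreSym p d = -1) {z : ℤ√d} (him : ¬ (p : ℤ) ∣ z.im) : IsCoprime (p : ℤ) z.norm := by
  refine (Nat.prime_iff_prime_int.mp hp.out).coprime_iff_not_dvd.mpr fun h ↦ him ?_
  refine (legendreSym.prime_dvd_of_eq_neg_one hd (x := z.re) ?_).2
  rwa [norm_def, show z.re * z.re - d * z.im * z.im = z.re ^ 2 - d * z.im ^ 2 by ring] at h

theorem natCast_dvd_pow_sub_star {p : ℕ} [hp : Fact p.Prime] (hp_odd : Odd p)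
    (hd : legendreSym p d = -1) (z : ℤ√d) : (p : ℤ√d) ∣ z ^ p - star z := by
  have := CharP.quotient (ℤ√d) p (natCast_prime_mem_nonunits hp.out)
  set f := Ideal.Quotient.mk (Ideal.span {(p : ℤ√d)})
  have hr : f sqrtd ^ 2 = ((d : ℤ) : _ ⧸ _) := by rw [← map_pow, sq, dmuld, map_intCast]
  rw [← Ideal.Quotient.eq_zero_iff_dvd, map_sub, sub_eq_zero, map_pow]
  obtain ⟨x, y⟩ := z
  rw [star_mk, decompose, decompose, map_add, map_mul, map_add, map_mul, map_intCast,
    map_intCast, map_intCast, mul_comm, intCast_add_mul_pow_prime hp_odd hd hr, Int.cast_neg]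
  ring

theorem natCast_pow_dvd_pow_sub_star {p n s : ℕ} [Fact p.Prime] (hp_odd : Odd p)
    (hd : legendreSym p d = -1) (hpn : p ∣ n) (hn : n ≠ 0) {z : ℤ√d}
    (hz : IsCoprime (p : ℤ) z.norm) (h : ((p ^ s : ℕ) : ℤ√d) ∣ z ^ n - star z) :
    ((p ^ s : ℕ) : ℤ√d) ∣ z ^ p - star z := by
  set f := Ideal.Quotient.mk (Ideal.span {((p ^ s : ℕ) : ℤ√d)})
  have hps : (p : ℤ√d ⧸ Ideal.span {((p ^ s : ℕ) : ℤ√d)}) ^ s = 0 := by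
    rw [← map_natCast f, ← map_pow, ← Nat.cast_pow, Ideal.Quotient.mk_singleton_self]
  have hunit : IsUnit (f z) := by
    have hcop : IsCoprime ((p ^ s : ℕ) : ℤ√d) (z.norm : ℤ√d) := by
      simpa using (hz.pow_left (m := s)).map (Int.castRingHom (ℤ√d))
    have := Ideal.Quotient.isUnit_mk_of_isCoprime hcop
    rw [norm_eq_mul_conj, map_mul] at this
    exact isUnit_of_mul_isUnit_left this
  have hzw : f z ^ n = f (star z) := by
    rw [← map_pow]; exact Ideal.Quotient.eq.mpr (Ideal.mem_span_singleton.mpr h)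
  have hwz : f (star z) ^ n = f z := by
    rw [← map_pow]; refine Ideal.Quotient.eq.mpr (Ideal.mem_span_singleton.mpr ?_)
    simpa [starRingEnd_apply] using map_dvd (starRingEnd (ℤ√d)) h
  have hfrob : (p : ℤ√d ⧸ Ideal.span {((p ^ s : ℕ) : ℤ√d)}) ∣ f z ^ p - f (star z) := by
    simpa using map_dvd f (natCast_dvd_pow_sub_star hp_odd hd z)
  rw [← Ideal.Quotient.eq_zero_iff_dvd, map_sub, map_pow, sub_eq_zero]
  exact pow_eq_of_pow_eq_swap_of_natCast_dvd_pow_sub hps hpn hn hunit hzw hwz hfrob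

end Zsqrtd

theorem stmt_14_general (a b c : ℤ) (n p s : ℕ) (hn : IsFPP a b c n) (hp : p.Prime)
    (hps : p ^ s ∣ n) (hJ : jacobiSym c p = -1) :
    ((p ^ s : ℕ) : Zsqrtd c) ∣
      ((⟨a, b⟩ : Zsqrtd c) ^ (p + 1) - ((a ^ 2 - b ^ 2 * c : ℤ) : Zsqrtd c)) ∧
    ((p ^ s : ℕ) : Zsqrtd c) ∣ ((⟨a, b⟩ : Zsqrtd c) ^ p - star (⟨a, b⟩ : Zsqrtd c)) := by
  obtain ⟨-, -, hodd, -, hcop, -, -, hFPP⟩ := hn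
  obtain rfl | hs := s.eq_zero_or_pos
  · simp
  have := Fact.mk hp
  have hpn : p ∣ n := (dvd_pow_self p hs.ne').trans hps
  have hleg : legendreSym p c = -1 := by rwa [jacobiSym.legendreSym.to_jacobiSym]
  have hpb : ¬ (p : ℤ) ∣ b := fun h ↦ (Nat.prime_iff_prime_int.mp hp).not_isUnit <|
    hcop.isUnit_of_dvd' ((h.mul_left a).mul_right c) (Int.natCast_dvd_natCast.mpr hpn)
  have hstar : ((p ^ s : ℕ) : ℤ√c) ∣ (⟨a, b⟩ : ℤ√c) ^ p - star ⟨a, b⟩ :=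
    Zsqrtd.natCast_pow_dvd_pow_sub_star (hodd.of_dvd_nat hpn) hleg hpn hodd.pos.ne'
      (Zsqrtd.isCoprime_norm_of_legendreSym_eq_neg_one hleg hpb)
      ((Nat.cast_dvd_cast hps).trans hFPP)
  refine ⟨?_, hstar⟩
  rw [← Zsqrtd.norm_mk, Zsqrtd.norm_eq_mul_conj]
  convert hstar.mul_right (⟨a, b⟩ : ℤ√c) using 1
  ring

/-- Theorem 2.9: if n is an FPP with parameters (a,b,c), p prime with J(c/p) = -1 and
p^s ∣ n (s ≥ 1), z = a+b√c, then z^(p+1) ≡ a²-b²c (mod p^s), equivalently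
z^p ≡ z̄ (mod p^s). -/
theorem stmt_14 (a b c : ℤ) (n p s : ℕ) (hn : IsFPP a b c n) (hp : p.Prime)
    (hs : 1 ≤ s) (hps : p ^ s ∣ n) (hJ : jacobiSym c p = -1) :
    ((p ^ s : ℕ) : Zsqrtd c) ∣
      ((⟨a, b⟩ : Zsqrtd c) ^ (p + 1) - ((a ^ 2 - b ^ 2 * c : ℤ) : Zsqrtd c)) ∧
    ((p ^ s : ℕ) : Zsqrtd c) ∣ ((⟨a, b⟩ : Zsqrtd c) ^ p - star (⟨a, b⟩ : Zsqrtd c)) :=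
  stmt_14_general a b c n p s hn hp hps hJ
end

section
/- If n is a Frobenius pseudoprime with parameters (a,b,c), then n is a Fermat pseudoprime to the base N = a² - b²c mod n, i.e., N^{n-1} ≡ 1 (mod n) (equivalently N^n ≡ N mod n), assuming N is invertible mod n. -/
namespace Zsqrtd

variable {d : ℤ}

theorem intCast_dvd_star_sub {m : ℤ} {x y : ℤ√d} (h : (m : ℤ√d) ∣ x - y) :
    (m : ℤ√d) ∣ star x - star y := by
  obtain ⟨k, hk⟩ := h
  exact ⟨star k, by rw [← star_sub, hk, star_mul', star_intCast]⟩

theorem intCast_dvd_norm_sub_norm {m : ℤ} {x y : ℤ√d} (h : (m : ℤ√d) ∣ x - y) :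
    m ∣ x.norm - y.norm := by
  rw [← intCast_dvd_intCast, Int.cast_sub, norm_eq_mul_conj, norm_eq_mul_conj]
  have hsplit : x * star x - y * star y = (x - y) * star x + y * (star x - star y) := by ring
  rw [hsplit]
  exact dvd_add (dvd_mul_of_dvd_left h _) (dvd_mul_of_dvd_right (intCast_dvd_star_sub h) _)

theorem norm_pow (x : ℤ√d) (n : ℕ) : (x ^ n).norm = x.norm ^ n :=
  map_pow normMonoidHom x n

end Zsqrtd

theorem IsCoprime.dvd_pow_pred_sub_one {R : Type*} [CommRing R] {x m : R} {n : ℕ}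
    (hx : IsCoprime x m) (hn : n ≠ 0) (h : m ∣ x ^ n - x) : m ∣ x ^ (n - 1) - 1 := by
  have hfactor : x ^ n - x = x * (x ^ (n - 1) - 1) := by
    rw [mul_sub, mul_one, ← pow_succ', Nat.sub_add_cancel (Nat.one_le_iff_ne_zero.mpr hn)]
  rw [hfactor] at h
  exact hx.symm.dvd_of_dvd_mul_left h

/-- If n is an FPP with parameters (a,b,c) and N = a²-b²c is invertible mod n,
then n is a Fermat pseudoprime to base N: N^(n-1) ≡ 1 (mod n). -/
theorem stmt_16 (a b c : ℤ) (n : ℕ) (hn : IsFPP a b c n)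
    (hN : IsCoprime (a ^ 2 - b ^ 2 * c) (n : ℤ)) :
    (n : ℤ) ∣ ((a ^ 2 - b ^ 2 * c) ^ (n - 1) - 1) := by
  obtain ⟨hn1, -, -, -, -, -, -, hfrob⟩ := hn
  set z : ℤ√c := ⟨a, b⟩
  rw [← Int.cast_natCast] at hfrob
  have hnorm : (n : ℤ) ∣ z.norm ^ n - z.norm := by
    simpa only [Zsqrtd.norm_pow, Zsqrtd.norm_conj] using
      Zsqrtd.intCast_dvd_norm_sub_norm hfrob
  rw [Zsqrtd.norm_mk] at hnorm
  exact hN.dvd_pow_pred_sub_one (by omega) hnorm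
end
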